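/- (Consistency) A conduct A and its orthogonal A^⊥ cannot both contain a successful project: if a = (0,A) and b = (0,B) are projects whose collapsed graphs Â, B̂ are disjoint unions of transpositions (all weights 1), then ⟪a,b⟫ ∈ {0, ∞}, hence a and b are not orthogonal. -/

import Mathlib

open scoped ENNReal

/-- A directed weighted graph with a definite (finite) set of vertex locations. -/
structure EGraph (V : Type) where
  verts : Finset V
  E : Type
  src : E → V
  tgt : E → V
  w : E → ℝ≥0∞
  src_mem : ∀ e, src e ∈ verts
  tgt_mem : ∀ e, tgt e ∈ verts

namespace EGraph

variable {V : Type} [DecidableEq V]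

/-- source of an edge of the plugging `G □ H` -/
def psrc (G H : EGraph V) : G.E ⊕ H.E → V := Sum.elim G.src H.src

/-- target of an edge of the plugging `G □ H` -/
def ptgt (G H : EGraph V) : G.E ⊕ H.E → V := Sum.elim G.tgt H.tgt

/-- weight of an edge of the plugging `G □ H` -/
def pw (G H : EGraph V) : G.E ⊕ H.E → ℝ≥0∞ := Sum.elim G.w H.w

/-- An alternating path in the plugging `G □ H`: a nonempty composable sequence of
colored edges whose consecutive edges have distinct colors. -/
structure AltPath (G H : EGraph V) where
  edges : List (G.E ⊕ H.E)
  ne : edges ≠ []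
  chain : edges.Chain' (fun e f => ptgt G H e = psrc G H f ∧ e.isLeft ≠ f.isLeft)

variable {G H : EGraph V}

def AltPath.src (p : AltPath G H) : V := psrc G H (p.edges.head p.ne)
def AltPath.tgt (p : AltPath G H) : V := ptgt G H (p.edges.getLast p.ne)

noncomputable def AltPath.weight (p : AltPath G H) : ℝ≥0∞ :=
  (p.edges.map (pw G H)).prod

/-- An alternating cycle: the target of the last edge is the source of the first one,
and moreover the colors of the last and first edges differ. -/
def AltPath.IsCycle (p : AltPath G H) : Prop :=
  p.tgt = p.src ∧ (p.edges.getLast p.ne).isLeft ≠ (p.edges.head p.ne).isLeft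

/-- A list is primitive (a `1`-cycle) when it is not a proper power of a shorter list. -/
def PrimitiveList {α : Type*} (l : List α) : Prop :=
  ∀ (k : ℕ) (r : List α), l = (List.replicate k r).flatten → k = 1

def AltPath.IsOneCycle (p : AltPath G H) : Prop := p.IsCycle ∧ PrimitiveList p.edges

/-- Equivalence of alternating 1-cycles up to cyclic permutation. -/
def cycSetoid (G H : EGraph V) : Setoid {p : AltPath G H // p.IsOneCycle} where
  r p q := ∃ k, q.1.edges = p.1.edges.rotate k
  iseqv := by
    constructor
    · exact fun p => ⟨0, (p.1.edges.rotate_zero).symm⟩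
    · rintro p q ⟨k, hk⟩
      refine ⟨p.1.edges.length * (k + 1) - k, ?_⟩
      rw [hk, List.rotate_rotate]
      rcases Nat.eq_zero_or_pos p.1.edges.length with h0 | hpos
      · rw [List.length_eq_zero_iff] at h0
        simp [h0]
      · have hkle : k ≤ p.1.edges.length * (k + 1) := by nlinarith
        rw [Nat.add_sub_cancel' hkle, List.rotate_length_mul]
    · rintro p q r ⟨k, hk⟩ ⟨m, hm⟩
      exact ⟨k + m, by rw [hm, hk, List.rotate_rotate]⟩

/-- The set of alternating 1-circuits between `G` and `H`: alternating 1-cycles up to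
cyclic permutation. -/
def Circ (G H : EGraph V) := Quotient (cycSetoid G H)

/-- The weight of a circuit. -/
noncomputable def cweight {G H : EGraph V} : Circ G H → ℝ≥0∞ :=
  Quotient.lift (fun p => p.1.weight)
    (by
      rintro p q ⟨k, hk⟩
      show p.1.weight = q.1.weight
      unfold AltPath.weight
      rw [hk]
      exact (((p.1.edges.map (pw G H)).rotate_perm k).prod_eq).symm.trans (by rw [List.map_rotate]))

/-- `-log(1-x)`, valued in `[0,∞]`, with the convention `log 0 = -∞`. -/
noncomputable def mval (x : ℝ≥0∞) : ℝ≥0∞ :=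
  if 1 ≤ x then ⊤ else ENNReal.ofReal (-Real.log (1 - x.toReal))

/-- The measurement `⟪G,H⟫ = Σ_{π ∈ C(G,H)} -log(1-ω(π))`. -/
noncomputable def meas (G H : EGraph V) : ℝ≥0∞ := ∑' c : Circ G H, mval (cweight c)

/-- The extended measurement value `Σ_{k ≥ 1} x^k / k`. -/
noncomputable def mvalExt (x : ℝ≥0∞) : ℝ≥0∞ := ∑' k : ℕ, x ^ (k + 1) / (k + 1)

/-- The measurement extended to arbitrary weights. -/
noncomputable def measExt (G H : EGraph V) : ℝ≥0∞ := ∑' c : Circ G H, mvalExt (cweight c)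

/-- The union of two graphs: union of the vertices, disjoint union of the edges. -/
def union (G H : EGraph V) : EGraph V where
  verts := G.verts ∪ H.verts
  E := G.E ⊕ H.E
  src := psrc G H
  tgt := ptgt G H
  w := pw G H
  src_mem := by
    rintro (e | e)
    · exact Finset.mem_union_left _ (G.src_mem e)
    · exact Finset.mem_union_right _ (H.src_mem e)
  tgt_mem := by
    rintro (e | e)
    · exact Finset.mem_union_left _ (G.tgt_mem e)
    · exact Finset.mem_union_right _ (H.tgt_mem e)

/-- The reduction `G ∷ H`: vertices the symmetric difference, edges the alternating
paths with endpoints in the symmetric difference, weighted multiplicatively. -/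
noncomputable def reduct (G H : EGraph V) : EGraph V where
  verts := symmDiff G.verts H.verts
  E := {p : AltPath G H //
        p.src ∈ symmDiff G.verts H.verts ∧ p.tgt ∈ symmDiff G.verts H.verts}
  src := fun p => p.1.src
  tgt := fun p => p.1.tgt
  w := fun p => p.1.weight
  src_mem := fun p => p.2.1
  tgt_mem := fun p => p.2.2

/-- The collapsed (simple) graph `Ĝ`, with weights the sums of the weights of parallel
edges. -/
noncomputable def adj (G : EGraph V) (v u : V) : ℝ≥0∞ :=
  ∑' e : {e : G.E // G.src e = v ∧ G.tgt e = u}, G.w e.1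

noncomputable def collapse (G : EGraph V) : EGraph V where
  verts := G.verts
  E := {p : V × V // ∃ e : G.E, G.src e = p.1 ∧ G.tgt e = p.2}
  src := fun p => p.1.1
  tgt := fun p => p.1.2
  w := fun p => adj G p.1.1 p.1.2
  src_mem := fun p => by obtain ⟨e, he, _⟩ := p.2; show p.1.1 ∈ G.verts; rw [← he]; exact G.src_mem e
  tgt_mem := fun p => by obtain ⟨e, _, he⟩ := p.2; show p.1.2 ∈ G.verts; rw [← he]; exact G.tgt_mem e

end EGraph

open EGraph

variable {V : Type} [DecidableEq V]

private lemma list_prod_pos {l : List ℝ≥0∞} (h : ∀ x ∈ l, 0 < x) : 0 < l.prod := by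
  induction l with
  | nil => simp
  | cons a t ih =>
    rw [List.prod_cons]
    exact ENNReal.mul_pos (h a List.mem_cons_self).ne'
      (ih fun x hx => h x (List.mem_cons_of_mem _ hx)).ne'

private lemma list_prod_le_one {l : List ℝ≥0∞} (h : ∀ x ∈ l, x ≤ 1) : l.prod ≤ 1 := by
  induction l with
  | nil => simp
  | cons a t ih =>
    rw [List.prod_cons]
    exact mul_le_one' (h a List.mem_cons_self)
      (ih fun x hx => h x (List.mem_cons_of_mem _ hx))

/-- A project: a wager together with a weighted directed graph whose weights lie in
`(0,1]`. -/
structure Project (V : Type) where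
  wager : ℝ≥0∞
  graph : EGraph V
  wpos : ∀ e, 0 < graph.w e
  wle : ∀ e, graph.w e ≤ 1

namespace Project

def carrier (p : Project V) : Finset V := p.graph.verts

/-- The measurement `⟪a,b⟫ = a + b + ⟪A,B⟫` of the interaction of two projects. -/
noncomputable def pmeas (p q : Project V) : ℝ≥0∞ := p.wager + q.wager + meas p.graph q.graph

/-- Orthogonality: the measurement is neither `0` nor `∞`. -/
def orth (p q : Project V) : Prop := pmeas p q ≠ 0 ∧ pmeas p q ≠ ⊤

/-- Tensor product of projects. -/
noncomputable def tensor (p q : Project V) : Project V where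
  wager := pmeas p q
  graph := union p.graph q.graph
  wpos := by rintro (e | e); exacts [p.wpos e, q.wpos e]
  wle := by rintro (e | e); exacts [p.wle e, q.wle e]

/-- The cut of two projects (meaningful when `⟪p,q⟫ ≠ ∞`). -/
noncomputable def cut (p q : Project V) : Project V where
  wager := pmeas p q
  graph := reduct p.graph q.graph
  wpos := by
    rintro ⟨e, -⟩
    refine list_prod_pos ?_
    intro x hx
    obtain ⟨d, -, rfl⟩ := List.mem_map.1 hx
    rcases d with d | d
    exacts [p.wpos d, q.wpos d]
  wle := by
    rintro ⟨e, -⟩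
    refine list_prod_le_one ?_
    intro x hx
    obtain ⟨d, -, rfl⟩ := List.mem_map.1 hx
    rcases d with d | d
    exacts [p.wle d, q.wle d]

end Project

open Project

/-- The orthogonal of a set of projects, relative to a carrier `X`. -/
def perpOn (X : Finset V) (S : Set (Project V)) : Set (Project V) :=
  {q | q.carrier = X ∧ ∀ p ∈ S, orth p q}

/-- A conduct of carrier `X`: a nonempty set of projects of carrier `X` equal to its
biorthogonal. -/
structure IsConduct (X : Finset V) (S : Set (Project V)) : Prop where
  nonempty : S.Nonempty
  carrier_eq : ∀ p ∈ S, p.carrier = X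
  biorth : S = perpOn X (perpOn X S)

/-- `A ⊙ B`: the set of tensor products of members. -/
def setTens (A B : Set (Project V)) : Set (Project V) :=
  {r | ∃ a ∈ A, ∃ b ∈ B, r = a.tensor b}

/-- The tensor product of conducts: `A ⊗ B = (A ⊙ B)^⊥⊥`. -/
def tensConduct (X Y : Finset V) (A B : Set (Project V)) : Set (Project V) :=
  perpOn (X ∪ Y) (perpOn (X ∪ Y) (setTens A B))

/-- The linear implication `A ⊸ B = {f | ∀ a ∈ A, f ∷ a is defined and lies in B}`. -/
def limp (X Y : Finset V) (A B : Set (Project V)) : Set (Project V) :=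
  {f | f.carrier = X ∪ Y ∧ ∀ a ∈ A, pmeas f a ≠ ⊤ ∧ f.cut a ∈ B}

/-- The trace of (the collapse of) a graph. -/
noncomputable def gtrace (G : EGraph V) : ℝ≥0∞ := ∑ v ∈ G.verts, adj G v v

/-- The collapsed graph `Ĝ` is symmetric. -/
def SymmAdj (G : EGraph V) : Prop := ∀ v u, adj G v u = adj G u v

/-- `Ĝ³ = Ĝ`: the (adjacency matrix of the) graph of paths of length 3 in `Ĝ`
coincides with `Ĝ`. -/
def CubeAdj (G : EGraph V) : Prop :=
  ∀ v u, (∑ u₁ ∈ G.verts, ∑ u₂ ∈ G.verts, adj G v u₁ * adj G u₁ u₂ * adj G u₂ u) = adj G v u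

/-- A successful project: zero wager, collapsed graph symmetric, cube-idempotent and
traceless. -/
def Successful (p : Project V) : Prop :=
  p.wager = 0 ∧ SymmAdj p.graph ∧ CubeAdj p.graph ∧ gtrace p.graph = 0

/-- The collapsed graph is a disjoint union of weight-1 transpositions. -/
def IsDUT (G : EGraph V) : Prop :=
  (∀ v u, adj G v u ≠ 0 → adj G v u = 1) ∧
  (∀ v u, adj G v u = adj G u v) ∧
  (∀ v u u', adj G v u ≠ 0 → adj G v u' ≠ 0 → u = u') ∧
  (∀ v v' u, adj G v u ≠ 0 → adj G v' u ≠ 0 → v = v') ∧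
  (∀ v, adj G v v = 0)

/-- Isomorphism of located graphs: same vertices, and a weight- and endpoint-preserving
bijection of the edges. -/
def EGraph.IsIso (G H : EGraph V) : Prop :=
  G.verts = H.verts ∧ ∃ e : G.E ≃ H.E,
    (∀ x, H.src (e x) = G.src x) ∧ (∀ x, H.tgt (e x) = G.tgt x) ∧ (∀ x, H.w (e x) = G.w x)

/-- Equality of projects up to graph isomorphism. -/
def Project.Equiv (p q : Project V) : Prop :=
  p.wager = q.wager ∧ EGraph.IsIso p.graph q.graph

/-!
If there is no alternating 1-circuit, the measurement is an empty sum. Otherwise fix one, `π`, of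
length `L`. All edges of `Â` and `B̂` have weight `1`, i.e. every class of parallel edges of `A`
or `B` has total weight `1`; hence for every multiple `n` of `L`, the closed alternating walks
obtained from `π ^ (n / L)` by replacing each edge by a parallel one have total weight `1`. Each
such walk is the `k`-th power of a rotation of a unique circuit `ρ`, with `k |ρ| = n`, and `ρ`
has `|ρ|` rotations, so `∑_{k |ρ| = n} ω(ρ)^k / k ≥ 1 / n`. Summing over the multiples of `L` and
using `-log (1 - x) ≥ ∑_k x^k / k` gives `⟪A,B⟫ ≥ ∑_t 1 / (t L) = ∞`.
-/

namespace List

variable {α : Type*}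

theorem length_flatten_replicate (m : ℕ) (p : List α) :
    (replicate m p).flatten.length = m * p.length := by
  simp

theorem flatten_replicate_flatten_replicate (k j : ℕ) (p : List α) :
    (replicate k (replicate j p).flatten).flatten = (replicate (k * j) p).flatten := by
  induction k with
  | zero => simp
  | succ k ih =>
    rw [replicate_succ, flatten_cons, ih, show (k + 1) * j = j + k * j by ring, replicate_add,
      flatten_append]

theorem getElem_flatten_replicate {m : ℕ} {p : List α} {i : ℕ}
    (hi : i < (replicate m p).flatten.length) :
    (replicate m p).flatten[i] =
      p[i % p.length]'(Nat.mod_lt _ (Nat.pos_of_ne_zero fun h => by simp [h] at hi)) := by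
  induction m generalizing i with
  | zero => simp at hi
  | succ m ih =>
    simp only [replicate_succ, flatten_cons, getElem_append]
    split_ifs with h
    · simp [Nat.mod_eq_of_lt h]
    · rw [ih]
      exact getElem_congr_idx (Nat.mod_eq_sub_mod (not_lt.1 h)).symm

theorem exists_primitiveList_eq_flatten_replicate (l : List α) (hl : l ≠ []) :
    ∃ p m, 0 < m ∧ EGraph.PrimitiveList p ∧ l = (replicate m p).flatten := by
  induction hn : l.length using Nat.strong_induction_on generalizing l with
  | _ n ih =>
    by_cases hp : EGraph.PrimitiveList l
    · exact ⟨l, 1, one_pos, hp, by simp⟩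
    obtain ⟨k, r, rfl, hk⟩ : ∃ k r, l = (replicate k r).flatten ∧ k ≠ 1 := by
      simpa [EGraph.PrimitiveList] using hp
    have hk0 : k ≠ 0 := by rintro rfl; simp at hl
    have hr : r ≠ [] := by rintro rfl; simp at hl
    have hlt : r.length < n := by
      have := length_pos_iff.2 hr
      rw [← hn, length_flatten_replicate]
      nlinarith [show 2 ≤ k by omega]
    obtain ⟨p, m, hm, hprim, rfl⟩ := ih _ hlt r hr rfl
    exact ⟨p, k * m, by positivity, hprim, flatten_replicate_flatten_replicate k m p⟩

def IsCyclicChain (R : α → α → Prop) (l : List α) : Prop :=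
  ∀ i (hi : i < l.length), R l[i] (l[(i + 1) % l.length]'(Nat.mod_lt _ (by omega)))

variable {R : α → α → Prop} {l : List α}

theorem isCyclicChain_iff (hl : l ≠ []) :
    IsCyclicChain R l ↔ l.IsChain R ∧ R (l.getLast hl) (l.head hl) := by
  have hpos := length_pos_iff.2 hl
  rw [isChain_iff_getElem, getLast_eq_getElem, head_eq_getElem]
  constructor
  · intro h
    refine ⟨fun i hi => ?_, ?_⟩
    · simpa [Nat.mod_eq_of_lt hi] using h i (by omega)
    · simpa [Nat.sub_add_cancel hpos] using h (l.length - 1) (by omega)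
  · rintro ⟨h, hlast⟩ i hi
    rcases Nat.lt_or_ge (i + 1) l.length with hi' | hi'
    · simpa [Nat.mod_eq_of_lt hi'] using h i hi'
    · obtain rfl : i = l.length - 1 := by omega
      simpa [Nat.sub_add_cancel hpos] using hlast

theorem IsCyclicChain.flatten_replicate {p : List α} (h : IsCyclicChain R p) (m : ℕ) :
    IsCyclicChain R (replicate m p).flatten := by
  intro i hi
  rw [getElem_flatten_replicate, getElem_flatten_replicate]
  have hdvd : p.length ∣ (replicate m p).flatten.length := by simp
  convert h (i % p.length) (Nat.mod_lt _ (Nat.pos_of_ne_zero fun h0 => by simp [h0] at hi))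
    using 2
  rw [Nat.mod_mod_of_dvd _ hdvd, Nat.mod_add_mod]

theorem IsCyclicChain.of_flatten_replicate {p : List α} {m : ℕ} (hm : 0 < m)
    (h : IsCyclicChain R (replicate m p).flatten) : IsCyclicChain R p := by
  intro i hi
  have := h i (by rw [length_flatten_replicate]; nlinarith)
  rw [getElem_flatten_replicate, getElem_flatten_replicate] at this
  have hdvd : p.length ∣ (replicate m p).flatten.length := by simp
  convert this using 2
  · exact (Nat.mod_eq_of_lt hi).symm
  · rw [Nat.mod_mod_of_dvd _ hdvd]

theorem IsCyclicChain.of_getElem {S : α → α → Prop} {l' : List α} (h : IsCyclicChain R l)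
    (hlen : l'.length = l.length)
    (hRS : ∀ i j (hi : i < l.length) (hj : j < l.length), R l[i] l[j] → S l'[i] l'[j]) :
    IsCyclicChain S l' := by
  intro i hi
  have := hRS _ _ _ _ (h i (by omega))
  simpa [hlen] using this

end List

open scoped NNReal

namespace ENNReal

theorem tsum_inv_natCast_succ : ∑' t : ℕ, ((t + 1 : ℕ) : ℝ≥0∞)⁻¹ = ⊤ := by
  have h := (ENNReal.tsum_coe_eq_top_iff_not_summable_coe
    (f := fun t : ℕ => ((t + 1 : ℕ) : ℝ≥0)⁻¹)).2
    (by simpa using mt (summable_nat_add_iff 1).1 Real.not_summable_natCast_inv)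
  simpa using h

theorem tsum_inv_natCast_succ_mul (L : ℕ) :
    ∑' t : ℕ, (((t + 1) * L : ℕ) : ℝ≥0∞)⁻¹ = ⊤ := by
  have hsplit (t : ℕ) :
      (((t + 1) * L : ℕ) : ℝ≥0∞)⁻¹ = ((t + 1 : ℕ) : ℝ≥0∞)⁻¹ * (L : ℝ≥0∞)⁻¹ := by
    rw [Nat.cast_mul, ENNReal.mul_inv (by simp) (by simp)]
  rw [tsum_congr hsplit, ENNReal.tsum_mul_right, tsum_inv_natCast_succ,
    ENNReal.top_mul (ENNReal.inv_ne_zero.2 (ENNReal.natCast_ne_top L))]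

theorem tsum_pi_prod : ∀ {n : ℕ} {κ : Fin n → Type*} (u : ∀ i, κ i → ℝ≥0∞),
    ∑' f : (∀ i, κ i), ∏ i, u i (f i) = ∏ i, ∑' x, u i x
  | 0, κ, u => by
    rw [tsum_eq_single (fun i => i.elim0) fun f hf => absurd (funext fun i => i.elim0) hf]
    simp
  | n + 1, κ, u => by
    rw [← (Fin.consEquiv κ).tsum_eq, ENNReal.tsum_prod', Fin.prod_univ_succ,
      ← tsum_pi_prod (fun i => u i.succ), ← ENNReal.tsum_mul_right]
    refine tsum_congr fun a => ?_
    rw [← ENNReal.tsum_mul_left]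
    simp [Fin.prod_univ_succ]

end ENNReal

namespace EGraph

variable {V : Type} {G H : EGraph V}

theorem mvalExt_le_mval (x : ℝ≥0∞) : mvalExt x ≤ mval x := by
  rcases le_or_gt 1 x with h | h
  · simp [mval, h]
  have hx : x ≠ ⊤ := ne_top_of_lt h
  have hx1 : x.toReal < 1 := by simpa using ENNReal.toReal_strict_mono ENNReal.one_ne_top h
  have hsum := Real.hasSum_pow_div_log_of_abs_lt_one
    (by rwa [abs_of_nonneg ENNReal.toReal_nonneg])
  have hterm (k : ℕ) : x ^ (k + 1) / ((k : ℝ≥0∞) + 1)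
      = ENNReal.ofReal (x.toReal ^ (k + 1) / ((k : ℝ) + 1)) := by
    rw [ENNReal.ofReal_div_of_pos (by positivity), ENNReal.ofReal_pow ENNReal.toReal_nonneg,
      ENNReal.ofReal_toReal hx, ENNReal.ofReal_add (by positivity) zero_le_one]
    simp
  rw [mval, if_neg (not_le.2 h), mvalExt, tsum_congr hterm,
    ← ENNReal.ofReal_tsum_of_nonneg (fun k => by positivity) hsum.summable, hsum.tsum_eq]

theorem measExt_le_meas : measExt G H ≤ meas G H :=
  ENNReal.tsum_le_tsum fun _ => mvalExt_le_mval _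

variable (G H) in
def AltStep (e f : G.E ⊕ H.E) : Prop := ptgt G H e = psrc G H f ∧ e.isLeft ≠ f.isLeft

variable (G H) in
def Parallel (e e' : G.E ⊕ H.E) : Prop :=
  psrc G H e = psrc G H e' ∧ ptgt G H e = ptgt G H e' ∧ e.isLeft = e'.isLeft

theorem AltStep.of_parallel {e e' f f' : G.E ⊕ H.E} (h : AltStep G H e f)
    (he : Parallel G H e' e) (hf : Parallel G H f' f) : AltStep G H e' f' :=
  ⟨by rw [he.2.1, hf.1, h.1], by rw [he.2.2, hf.2.2]; exact h.2⟩

theorem AltPath.IsCycle.isCyclicChain {p : AltPath G H} (hp : p.IsCycle) :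
    p.edges.IsCyclicChain (AltStep G H) :=
  (List.isCyclicChain_iff p.ne).2 ⟨p.chain, hp⟩

theorem exists_isCycle_edges_eq {l : List (G.E ⊕ H.E)} (hl : l ≠ [])
    (h : l.IsCyclicChain (AltStep G H)) : ∃ p : AltPath G H, p.IsCycle ∧ p.edges = l :=
  have ⟨hchain, hlast⟩ := (List.isCyclicChain_iff hl).1 h
  ⟨⟨l, hl, hchain⟩, hlast, rfl⟩

noncomputable def circLen (c : Circ G H) : ℕ := (Quotient.out c).1.edges.length

theorem cweight_eq_weight_out (c : Circ G H) : cweight c = (Quotient.out c).1.weight := by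
  conv_lhs => rw [← Quotient.out_eq c]
  rfl

theorem exists_circ_eq_flatten_replicate {l : List (G.E ⊕ H.E)} (hl : l ≠ [])
    (h : l.IsCyclicChain (AltStep G H)) :
    ∃ (c : Circ G H) (k r : ℕ), r < circLen c ∧
      l = (List.replicate (k + 1) ((Quotient.out c).1.edges.rotate r)).flatten := by
  obtain ⟨p, m, hm, hprim, rfl⟩ := List.exists_primitiveList_eq_flatten_replicate l hl
  have hp : p ≠ [] := by rintro rfl; simp at hl
  obtain ⟨P, hcyc, rfl⟩ := exists_isCycle_edges_eq hp (h.of_flatten_replicate hm)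
  set c : Circ G H := Quotient.mk (cycSetoid G H) ⟨P, hcyc, hprim⟩
  obtain ⟨r, hr⟩ : ∃ r, P.edges = (Quotient.out c).1.edges.rotate r :=
    Quotient.exact (Quotient.out_eq c)
  have hlen : 0 < circLen c := by
    rw [circLen, ← List.length_rotate _ r, ← hr]
    exact List.length_pos_iff.2 hp
  refine ⟨c, m - 1, r % circLen c, Nat.mod_lt _ hlen, ?_⟩
  rw [Nat.sub_add_cancel hm, circLen, List.rotate_mod, ← hr]

theorem prod_map_pw_eq_cweight_pow (c : Circ G H) (k r : ℕ) :
    (((List.replicate k ((Quotient.out c).1.edges.rotate r)).flatten).map (pw G H)).prod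
      = cweight c ^ k := by
  simp [List.map_flatten, List.prod_flatten, cweight_eq_weight_out, AltPath.weight,
    (List.rotate_perm _ r).prod_eq]

theorem adj_src_tgt_eq_one (h1 : ∀ v u, adj G v u ≠ 0 → adj G v u = 1) (hw : ∀ e, 0 < G.w e)
    (e : G.E) : adj G (G.src e) (G.tgt e) = 1 :=
  h1 _ _ <| ne_of_gt <| (hw e).trans_le <|
    ENNReal.le_tsum (⟨e, rfl, rfl⟩ : {e' : G.E // G.src e' = G.src e ∧ G.tgt e' = G.tgt e})

theorem tsum_parallel_pw (hG : ∀ e, adj G (G.src e) (G.tgt e) = 1)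
    (hH : ∀ e, adj H (H.src e) (H.tgt e) = 1) (e₀ : G.E ⊕ H.E) :
    ∑' e : {e // Parallel G H e e₀}, pw G H e = 1 := by
  rcases e₀ with g | g
  · rw [← hG g, adj]
    refine (Function.Injective.tsum_eq (f := fun e : {e // Parallel G H e (.inl g)} => pw G H e)
      (g := fun e : {e // G.src e = G.src g ∧ G.tgt e = G.tgt g} =>
        ⟨.inl e.1, e.2.1, e.2.2, rfl⟩) ?_ ?_).symm
    · intro e e' h
      exact Subtype.ext (Sum.inl_injective (congrArg Subtype.val h))
    · rintro ⟨e | e, he⟩ -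
      exacts [⟨⟨e, he.1, he.2.1⟩, rfl⟩, absurd he.2.2 (by simp)]
  · rw [← hH g, adj]
    refine (Function.Injective.tsum_eq (f := fun e : {e // Parallel G H e (.inr g)} => pw G H e)
      (g := fun e : {e // H.src e = H.src g ∧ H.tgt e = H.tgt g} =>
        ⟨.inr e.1, e.2.1, e.2.2, rfl⟩) ?_ ?_).symm
    · intro e e' h
      exact Subtype.ext (Sum.inr_injective (congrArg Subtype.val h))
    · rintro ⟨e | e, he⟩ -
      exacts [absurd he.2.2 (by simp), ⟨⟨e, he.1, he.2.1⟩, rfl⟩]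

variable (G H) in
abbrev ParallelWalk (l : List (G.E ⊕ H.E)) : Type :=
  ∀ i : Fin l.length, {e // Parallel G H e l[i]}

def walkWord {l : List (G.E ⊕ H.E)} (f : ParallelWalk G H l) : List (G.E ⊕ H.E) :=
  List.ofFn fun i => (f i).1

theorem walkWord_injective {l : List (G.E ⊕ H.E)} :
    Function.Injective (walkWord : ParallelWalk G H l → _) :=
  fun _ _ h => funext fun i => Subtype.ext (congrFun (List.ofFn_injective h) i)

theorem length_walkWord {l : List (G.E ⊕ H.E)} (f : ParallelWalk G H l) :
    (walkWord f).length = l.length :=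
  List.length_ofFn

theorem isCyclicChain_walkWord {l : List (G.E ⊕ H.E)} (h : l.IsCyclicChain (AltStep G H))
    (f : ParallelWalk G H l) : (walkWord f).IsCyclicChain (AltStep G H) :=
  h.of_getElem (length_walkWord f) fun i j hi hj hij => by
    simpa [walkWord] using hij.of_parallel (f ⟨i, hi⟩).2 (f ⟨j, hj⟩).2

theorem tsum_walkWord_weight (hG : ∀ e, adj G (G.src e) (G.tgt e) = 1)
    (hH : ∀ e, adj H (H.src e) (H.tgt e) = 1) (l : List (G.E ⊕ H.E)) :
    ∑' f : ParallelWalk G H l, ((walkWord f).map (pw G H)).prod = 1 := by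
  simp only [walkWord, List.map_ofFn, List.prod_ofFn, Function.comp_def]
  rw [ENNReal.tsum_pi_prod (fun i (e : {e // Parallel G H e l[i]}) => pw G H e)]
  exact Finset.prod_eq_one fun i _ => tsum_parallel_pw hG hH _

variable (G H) in
/-- `x = (c, k)` stands for the power `c ^ (k + 1)`, a closed alternating walk of length `n`. -/
abbrev CircPow (n : ℕ) : Type := {x : Circ G H × ℕ // (x.2 + 1) * circLen x.1 = n}

variable (G H) in
noncomputable def measExtOfLength (n : ℕ) : ℝ≥0∞ :=
  ∑' x : CircPow G H n, cweight x.1.1 ^ (x.1.2 + 1) / (x.1.2 + 1)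

theorem tsum_sigma_circPow (n : ℕ) :
    ∑' σ : (Σ x : CircPow G H n, Fin (circLen x.1.1)), cweight σ.1.1.1 ^ (σ.1.1.2 + 1)
      = n * measExtOfLength G H n := by
  rw [measExtOfLength, ENNReal.tsum_sigma', ← ENNReal.tsum_mul_left]
  refine tsum_congr fun ⟨⟨c, k⟩, hck⟩ => ?_
  simp only [tsum_fintype, Finset.sum_const, Finset.card_univ, Fintype.card_fin, nsmul_eq_mul]
  rw [← hck, Nat.cast_mul, mul_right_comm, Nat.cast_add_one,
    ENNReal.mul_div_cancel (by positivity) (by simp), mul_comm]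

theorem inv_length_le_measExtOfLength (hG : ∀ e, adj G (G.src e) (G.tgt e) = 1)
    (hH : ∀ e, adj H (H.src e) (H.tgt e) = 1) {l : List (G.E ⊕ H.E)} (hl : l ≠ [])
    (h : l.IsCyclicChain (AltStep G H)) :
    (l.length : ℝ≥0∞)⁻¹ ≤ measExtOfLength G H l.length := by
  have hne (f : ParallelWalk G H l) : walkWord f ≠ [] := by
    rw [← List.length_pos_iff, length_walkWord]; exact List.length_pos_iff.2 hl
  choose c k r hr hword using fun f =>
    exists_circ_eq_flatten_replicate (hne f) (isCyclicChain_walkWord h f)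
  have hlen (f : ParallelWalk G H l) : (k f + 1) * circLen (c f) = l.length := by
    simpa [circLen, length_walkWord] using (congrArg List.length (hword f)).symm
  let Φ (f : ParallelWalk G H l) : Σ x : CircPow G H l.length, Fin (circLen x.1.1) :=
    ⟨⟨(c f, k f), hlen f⟩, ⟨r f, hr f⟩⟩
  have hΦ : Function.Injective Φ := fun f f' hff' => walkWord_injective <| by
    rw [hword f, hword f']
    exact congrArg (fun σ : Σ x : CircPow G H l.length, Fin (circLen x.1.1) =>
      (List.replicate (σ.1.1.2 + 1) ((Quotient.out σ.1.1.1).1.edges.rotate σ.2)).flatten) hff'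
  have hone : 1 ≤ (l.length : ℝ≥0∞) * measExtOfLength G H l.length := by
    calc (1 : ℝ≥0∞) = ∑' f, ((walkWord f).map (pw G H)).prod :=
          (tsum_walkWord_weight hG hH l).symm
      _ = ∑' f, cweight (Φ f).1.1.1 ^ ((Φ f).1.1.2 + 1) :=
        tsum_congr fun f => by rw [hword f, prod_map_pw_eq_cweight_pow]
      _ ≤ _ := ENNReal.tsum_comp_le_tsum_of_injective hΦ _
      _ = _ := tsum_sigma_circPow _
  exact (ENNReal.inv_le_iff_le_mul (fun _ => by simpa using hl) (by simp)).2 hone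

theorem tsum_measExtOfLength : ∑' n, measExtOfLength G H n = measExt G H := by
  calc _ = ∑' σ : Σ n, CircPow G H n, cweight σ.2.1.1 ^ (σ.2.1.2 + 1) / (σ.2.1.2 + 1) :=
        (ENNReal.tsum_sigma' _).symm
    _ = ∑' x : Circ G H × ℕ, cweight x.1 ^ (x.2 + 1) / (x.2 + 1) :=
        (Equiv.sigmaFiberEquiv fun x : Circ G H × ℕ => (x.2 + 1) * circLen x.1).tsum_eq
          fun x => cweight x.1 ^ (x.2 + 1) / (x.2 + 1)
    _ = measExt G H := by rw [ENNReal.tsum_prod']; rfl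

theorem meas_eq_top (hG : ∀ e, adj G (G.src e) (G.tgt e) = 1)
    (hH : ∀ e, adj H (H.src e) (H.tgt e) = 1) (c : Circ G H) : meas G H = ⊤ := by
  set l := (Quotient.out c).1.edges
  have hl : l.IsCyclicChain (AltStep G H) := (Quotient.out c).2.1.isCyclicChain
  have hpos : 0 < l.length := List.length_pos_iff.2 (Quotient.out c).1.ne
  have hpow (t : ℕ) : (((t + 1) * l.length : ℕ) : ℝ≥0∞)⁻¹
      ≤ measExtOfLength G H ((t + 1) * l.length) := by
    simpa only [List.length_flatten_replicate] using
      inv_length_le_measExtOfLength hG hH (l := (List.replicate (t + 1) l).flatten)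
        (by simpa using (Quotient.out c).1.ne) (hl.flatten_replicate _)
  refine top_le_iff.1 ?_
  calc ⊤ = ∑' t : ℕ, (((t + 1) * l.length : ℕ) : ℝ≥0∞)⁻¹ :=
        (ENNReal.tsum_inv_natCast_succ_mul _).symm
    _ ≤ _ := ENNReal.tsum_le_tsum hpow
    _ ≤ _ := ENNReal.tsum_comp_le_tsum_of_injective
        (fun s t hst => by simpa using Nat.eq_of_mul_eq_mul_right hpos hst) _
    _ = measExt G H := tsum_measExtOfLength
    _ ≤ meas G H := measExt_le_meas

end EGraph

theorem stmt12_general {V : Type} (a b : Project V)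
    (ha0 : a.wager = 0) (hb0 : b.wager = 0)
    (hA : IsDUT a.graph) (hB : IsDUT b.graph) :
    (pmeas a b = 0 ∨ pmeas a b = ⊤) ∧ ¬ orth a b := by
  have hmeas : pmeas a b = meas a.graph b.graph := by rw [pmeas, ha0, hb0, zero_add, zero_add]
  have hdich : pmeas a b = 0 ∨ pmeas a b = ⊤ := by
    rw [hmeas]
    rcases isEmpty_or_nonempty (Circ a.graph b.graph) with hempty | hcirc
    · exact Or.inl (by rw [meas, tsum_empty])
    · exact Or.inr <| meas_eq_top (adj_src_tgt_eq_one hA.1 a.wpos)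
        (adj_src_tgt_eq_one hB.1 b.wpos) hcirc.some
  exact ⟨hdich, fun horth => hdich.elim horth.1 horth.2⟩

/-- Consistency: if `a = (0,A)` and `b = (0,B)` are projects of the same carrier whose
collapsed graphs are disjoint unions of weight-1 transpositions, then
`⟪a,b⟫ ∈ {0,∞}`, hence `a` and `b` are not orthogonal. In particular a conduct and its
orthogonal cannot both contain a successful project. -/
theorem stmt12 {V : Type} [DecidableEq V] (a b : Project V)
    (hc : a.carrier = b.carrier) (ha0 : a.wager = 0) (hb0 : b.wager = 0)
    (hA : IsDUT a.graph) (hB : IsDUT b.graph) :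
    (pmeas a b = 0 ∨ pmeas a b = ⊤) ∧ ¬ orth a b :=
  stmt12_general a b ha0 hb0 hA hB
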